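/- arXiv:2012.11459 — 3 statements merged into one kernel-verified Lean document; each statement's English description precedes it below -/
import Mathlib

section
/- Let d ≥ 1 and k ≥ 2d+1 be integers, let G be any simple graph, and let γ_s and γ_t be two proper colorings of G using only colors from {1,…,d+1}. Then there is a recoloring sequence through proper k-colorings (with color set {1,…,k}) transforming γ_s into γ_t in which every vertex of G is recolored at most twice. -/
/-!
Basic framework: proper `k`-colorings (colors in `Fin k`) and recoloring
sequences (lists of steps, each recoloring a single vertex with a new color,
all intermediate colorings being proper).
-/

variable {V : Type*}

/-- `σ` is a proper coloring of `G`. -/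
def IsProperColoring {k : ℕ} (G : SimpleGraph V) (σ : V → Fin k) : Prop :=
  ∀ ⦃x y⦄, G.Adj x y → σ x ≠ σ y

/-- Apply a list of recoloring steps to a coloring. -/
def applySteps {k : ℕ} [DecidableEq V] (α : V → Fin k) (S : List (V × Fin k)) : V → Fin k :=
  S.foldl (fun σ s => Function.update σ s.1 s.2) α

/-- `S` is a valid recoloring sequence from `α` to `β` in `G`: every intermediate
coloring is proper, every step changes the color of the recolored vertex, and the
final coloring is `β`. -/
def IsRecolSeq {k : ℕ} [DecidableEq V] (G : SimpleGraph V) (α β : V → Fin k)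
    (S : List (V × Fin k)) : Prop :=
  (∀ i, IsProperColoring G (applySteps α (S.take i))) ∧
  (∀ i (h : i < S.length), applySteps α (S.take i) (S.get ⟨i, h⟩).1 ≠ (S.get ⟨i, h⟩).2) ∧
  applySteps α S = β

/-- The number of steps of `S` recoloring the vertex `v`. -/
def recolCount {k : ℕ} [DecidableEq V] (S : List (V × Fin k)) (v : V) : ℕ :=
  (S.filter fun s => decide (s.1 = v)).length

/-- A perfect elimination ordering witnessing chordality with clique number at
most `3`: each vertex has at most two neighbors appearing later in the list, and
when it has two such neighbors they are adjacent. -/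
def IsPEOList (G : SimpleGraph V) : List V → Prop
  | [] => True
  | v :: vs =>
      (¬ ∃ w₁ ∈ vs, ∃ w₂ ∈ vs, ∃ w₃ ∈ vs,
          G.Adj v w₁ ∧ G.Adj v w₂ ∧ G.Adj v w₃ ∧ w₁ ≠ w₂ ∧ w₁ ≠ w₃ ∧ w₂ ≠ w₃) ∧
      (∀ w₁ ∈ vs, ∀ w₂ ∈ vs, G.Adj v w₁ → G.Adj v w₂ → w₁ ≠ w₂ → G.Adj w₁ w₂) ∧
      IsPEOList G vs

/-- `G` is a chordal graph with clique number at most `3`, i.e. it admits a perfect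
elimination ordering of all its vertices in which every vertex has at most two later
neighbors, adjacent when there are two of them. -/
def IsChordalOmega3 (G : SimpleGraph V) : Prop :=
  ∃ order : List V, order.Nodup ∧ (∀ v : V, v ∈ order) ∧ IsPEOList G order

/-!
If `α` and `β` are proper colorings and no edge `xy` has `α x = β y`, then every coloring taking
each vertex `v` to `α v` or `β v` is proper, so the vertices can be switched from `α` to `β` one at
a time, each at most once. The colors `0, …, d` carry `γs` and `γt`, while `d + 1, …, 2d` are
free. Three such rounds suffice: park every vertex with `γt v ≠ 0` at the free color `γt v + d`,
then move the remaining vertices to `γt v = 0`, then move the parked vertices to `γt v`.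
A vertex with `γt v = 0` moves only in the middle round, any other only in the outer two.
-/

section RecoloringSequences

variable {k : ℕ} {G : SimpleGraph V}

theorem isProperColoring_of_forall_eq_or_eq {α β σ : V → Fin k} (hα : IsProperColoring G α)
    (hβ : IsProperColoring G β) (hαβ : ∀ ⦃x y⦄, G.Adj x y → α x ≠ β y)
    (hσ : ∀ v, σ v = α v ∨ σ v = β v) : IsProperColoring G σ := by
  intro x y hxy
  rcases hσ x with hx | hx <;> rcases hσ y with hy | hy <;> rw [hx, hy]
  exacts [hα hxy, hαβ hxy, (hαβ hxy.symm).symm, hβ hxy]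

variable [DecidableEq V]

theorem isRecolSeq_nil {α β : V → Fin k} :
    IsRecolSeq G α β [] ↔ IsProperColoring G α ∧ α = β := by
  simp [IsRecolSeq, applySteps]

theorem isRecolSeq_cons {α β : V → Fin k} {v : V} {c : Fin k} {S : List (V × Fin k)} :
    IsRecolSeq G α β ((v, c) :: S) ↔
      IsProperColoring G α ∧ α v ≠ c ∧ IsRecolSeq G (Function.update α v c) β S := by
  constructor
  · rintro ⟨hprop, hne, hend⟩
    exact ⟨hprop 0, hne 0 (by simp), fun i => hprop (i + 1),
      fun i hi => hne (i + 1) (by simpa using hi), hend⟩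
  · rintro ⟨hα, hv, hprop, hne, hend⟩
    refine ⟨?_, ?_, hend⟩
    · rintro (_ | i)
      exacts [hα, hprop i]
    · rintro (_ | i) hi
      exacts [hv, hne i (by simpa using hi)]

theorem IsRecolSeq.append {α β γ : V → Fin k} {S T : List (V × Fin k)}
    (hS : IsRecolSeq G α β S) (hT : IsRecolSeq G β γ T) : IsRecolSeq G α γ (S ++ T) := by
  induction S generalizing α with
  | nil =>
    obtain ⟨-, rfl⟩ := isRecolSeq_nil.mp hS
    exact hT
  | cons s S ih =>
    obtain ⟨v, c⟩ := s
    obtain ⟨hα, hv, hS⟩ := isRecolSeq_cons.mp hS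
    exact isRecolSeq_cons.mpr ⟨hα, hv, ih hS⟩

theorem recolCount_append (S T : List (V × Fin k)) (v : V) :
    recolCount (S ++ T) v = recolCount S v + recolCount T v := by
  simp [recolCount, List.filter_append]

theorem recolCount_map (β : V → Fin k) (L : List V) (v : V) :
    recolCount (L.map fun w => (w, β w)) v = L.count v := by
  simp only [recolCount, List.filter_map, List.length_map, List.count,
    List.countP_eq_length_filter]
  rfl

theorem isRecolSeq_map_of_forall_mixture_proper {α β : V → Fin k} {L : List V} (hL : L.Nodup)
    (hmem : ∀ v, v ∈ L ↔ α v ≠ β v)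
    (hmix : ∀ σ : V → Fin k, (∀ v, σ v = α v ∨ σ v = β v) → IsProperColoring G σ) :
    IsRecolSeq G α β (L.map fun v => (v, β v)) := by
  induction L generalizing α with
  | nil =>
    refine isRecolSeq_nil.mpr ⟨hmix α fun _ => .inl rfl, funext fun v => ?_⟩
    simpa using (hmem v).not
  | cons v L ih =>
    obtain ⟨hvL, hL⟩ := List.nodup_cons.mp hL
    refine isRecolSeq_cons.mpr ⟨hmix α fun _ => .inl rfl, (hmem v).mp List.mem_cons_self,
      ih hL (fun w => ?_) fun σ hσ => hmix σ fun w => ?_⟩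
    · by_cases hw : w = v
      · subst hw; simpa using hvL
      · simpa [Function.update_of_ne hw, hw] using hmem w
    · by_cases hw : w = v
      · subst hw; exact .inr (by simpa using hσ w)
      · simpa [Function.update_of_ne hw] using hσ w

theorem exists_isRecolSeq_of_adj_ne [Fintype V] {α β : V → Fin k} (hα : IsProperColoring G α)
    (hβ : IsProperColoring G β) (hαβ : ∀ ⦃x y⦄, G.Adj x y → α x ≠ β y) :
    ∃ S, IsRecolSeq G α β S ∧ ∀ v, recolCount S v = if α v = β v then 0 else 1 := by
  set L := (Finset.univ.filter fun v => α v ≠ β v).toList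
  have hmem (v : V) : v ∈ L ↔ α v ≠ β v := by simp [L]
  refine ⟨L.map fun v => (v, β v), isRecolSeq_map_of_forall_mixture_proper
    (Finset.nodup_toList _) hmem fun σ => isProperColoring_of_forall_eq_or_eq hα hβ hαβ,
    fun v => ?_⟩
  rw [recolCount_map, (Finset.nodup_toList _).count]
  by_cases h : α v = β v <;> simp [h]

end RecoloringSequences

section Parking

variable {d k : ℕ}

def parkColoring (γt τ c : V → Fin k) : V → Fin k :=
  fun v => if (γt v : ℕ) = 0 then c v else τ v

variable {G : SimpleGraph V} {γt τ : V → Fin k}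

theorem parkColoring_adj_ne (hγt : IsProperColoring G γt) (hτ : ∀ v, (τ v : ℕ) = γt v + d)
    {c c' : V → Fin k} {x y : V} (hxy : G.Adj x y) (hcx : (c x : ℕ) < d + 1)
    (hcy : (c' y : ℕ) < d + 1) (h0 : (γt x : ℕ) = 0 → (γt y : ℕ) = 0 → c x ≠ c' y) :
    parkColoring γt τ c x ≠ parkColoring γt τ c' y := by
  have hxy' := Fin.val_ne_of_ne (hγt hxy)
  unfold parkColoring
  split_ifs with hx hy hy
  · exact h0 hx hy
  all_goals simp only [Ne, Fin.ext_iff, hτ]; omega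

theorem adj_ne_parkColoring (hτ : ∀ v, (τ v : ℕ) = γt v + d) {c : V → Fin k}
    (hc : IsProperColoring G c) (hcd : ∀ v, (c v : ℕ) < d + 1) {x y : V} (hxy : G.Adj x y) :
    c x ≠ parkColoring γt τ c y := by
  unfold parkColoring
  split_ifs with hy
  · exact hc hxy
  · rw [Ne, Fin.ext_iff, hτ]
    have := hcd x
    omega

end Parking

theorem statement_2_general (d k : ℕ) (hk : 2 * d + 1 ≤ k)
    {V : Type*} [Fintype V] [DecidableEq V] (G : SimpleGraph V)
    (γs γt : V → Fin k)
    (hγs : IsProperColoring G γs) (hγt : IsProperColoring G γt)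
    (hsd : ∀ v : V, (γs v : ℕ) < d + 1) (htd : ∀ v : V, (γt v : ℕ) < d + 1) :
    ∃ S : List (V × Fin k), IsRecolSeq G γs γt S ∧ ∀ v : V, recolCount S v ≤ 2 := by
  obtain ⟨τ, hτ⟩ : ∃ τ : V → Fin k, ∀ v, (τ v : ℕ) = γt v + d :=
    ⟨fun v => ⟨γt v + d, by have := htd v; omega⟩, fun _ => rfl⟩
  have hpark {c : V → Fin k} (hc : IsProperColoring G c) (hcd : ∀ v, (c v : ℕ) < d + 1) :
      IsProperColoring G (parkColoring γt τ c) := fun x y hxy =>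
    parkColoring_adj_ne hγt hτ hxy (hcd x) (hcd y) fun _ _ => hc hxy
  obtain ⟨S₁, hS₁, hcount₁⟩ := exists_isRecolSeq_of_adj_ne hγs (hpark hγs hsd)
    fun x y hxy => adj_ne_parkColoring hτ hγs hsd hxy
  obtain ⟨S₂, hS₂, hcount₂⟩ := exists_isRecolSeq_of_adj_ne (hpark hγs hsd) (hpark hγt htd)
    fun x y hxy => parkColoring_adj_ne hγt hτ hxy (hsd x) (htd y)
      fun hx hy => (hγt hxy (Fin.ext (hx.trans hy.symm))).elim
  obtain ⟨S₃, hS₃, hcount₃⟩ := exists_isRecolSeq_of_adj_ne (hpark hγt htd) hγt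
    fun x y hxy => (adj_ne_parkColoring hτ hγt htd hxy.symm).symm
  refine ⟨S₁ ++ S₂ ++ S₃, (hS₁.append hS₂).append hS₃, fun v => ?_⟩
  rw [recolCount_append, recolCount_append, hcount₁, hcount₂, hcount₃]
  by_cases h : (γt v : ℕ) = 0 <;> simp only [parkColoring, h, if_true, if_false] <;>
    split_ifs <;> omega

/-- Let `d ≥ 1` and `k ≥ 2d+1`, let `G` be a simple graph, and let
`γs, γt` be two proper colorings of `G` using only the first `d+1` colors among the `k`
colors. Then there is a recoloring sequence through proper `k`-colorings from `γs` to
`γt` recoloring every vertex at most twice. -/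
theorem statement_2 (d k : ℕ) (hd : 1 ≤ d) (hk : 2 * d + 1 ≤ k)
    {V : Type*} [Fintype V] [DecidableEq V] (G : SimpleGraph V)
    (γs γt : V → Fin k)
    (hγs : IsProperColoring G γs) (hγt : IsProperColoring G γt)
    (hsd : ∀ v : V, (γs v : ℕ) < d + 1) (htd : ∀ v : V, (γt v : ℕ) < d + 1) :
    ∃ S : List (V × Fin k), IsRecolSeq G γs γt S ∧ ∀ v : V, recolCount S v ≤ 2 :=
  statement_2_general d k hk G γs γt hγs hγt hsd htd
end

section
/- Let a_0, a_1, …, a_m and b_0, b_1, …, b_m be sequences taking values in a set of 5 colors such that: (i) for every i with i + 2 ≤ m, the five values a_i, a_{i+1}, b_{i+1}, a_{i+2}, b_{i+2} are pairwise distinct; and (ii) for every i with i + 3 ≤ m, b_{i+1} ≠ b_{i+3}. Then for every i with i + 3 ≤ m, b_{i+3} = a_i and b_{i+1} = a_{i+3}. -/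
/-- Let `a_0,…,a_m` and `b_0,…,b_m` be sequences with values in a set
of `5` colors such that (i) for every `i` with `i+2 ≤ m` the five values
`a i, a (i+1), b (i+1), a (i+2), b (i+2)` are pairwise distinct, and (ii) for every `i`
with `i+3 ≤ m`, `b (i+1) ≠ b (i+3)`. Then for every `i` with `i+3 ≤ m` we have
`b (i+3) = a i` and `b (i+1) = a (i+3)`. -/
theorem statement_10 (m : ℕ) (a b : ℕ → Fin 5)
    (h1 : ∀ i, i + 2 ≤ m →
      List.Pairwise (· ≠ ·) [a i, a (i + 1), b (i + 1), a (i + 2), b (i + 2)])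
    (h2 : ∀ i, i + 3 ≤ m → b (i + 1) ≠ b (i + 3)) :
    ∀ i, i + 3 ≤ m → b (i + 3) = a i ∧ b (i + 1) = a (i + 3) := by
  intro i hi
  have H1 := h1 i (by omega)
  have H2 := h1 (i + 1) (by omega)
  have H3 := h2 i hi
  have hn : ([a (i+1), a (i+2), b (i+2), a (i+3), b (i+3)] : List (Fin 5)).Nodup := H2
  have huniv : ([a (i+1), a (i+2), b (i+2), a (i+3), b (i+3)] : List (Fin 5)).toFinset
      = Finset.univ := by
    apply Finset.eq_univ_of_card
    rw [List.toFinset_card_of_nodup hn]; rfl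
  have mem : ∀ z : Fin 5, z = a (i+1) ∨ z = a (i+2) ∨ z = b (i+2) ∨ z = a (i+3)
      ∨ z = b (i+3) := by
    intro z
    have hz := Finset.mem_univ z
    rw [← huniv, List.mem_toFinset] at hz
    simpa using hz
  simp only [List.pairwise_cons, List.mem_cons, List.not_mem_nil, or_false,
    List.mem_singleton, forall_eq_or_imp, forall_eq] at H1 H2
  have hb1 : b (i + 1) = a (i + 3) := by
    rcases mem (b (i + 1)) with h | h | h | h | h <;> simp_all
  have hb3 : b (i + 3) = a i := by
    rcases mem (a i) with h | h | h | h | h <;> simp_all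
  exact ⟨hb3, hb1⟩
end

section
/- Let a_0, a_1, …, a_m and b_0, b_1, …, b_m be sequences taking values in a set of 5 colors such that: (i) for every i with i + 2 ≤ m, the five values a_i, a_{i+1}, b_{i+1}, a_{i+2}, b_{i+2} are pairwise distinct; and (ii) for every i with i + 3 ≤ m, b_{i+1} ≠ b_{i+3}. Then for every i with i + 4 ≤ m, the values a_i, a_{i+1}, a_{i+2}, a_{i+3}, a_{i+4} are pairwise distinct, and for every i with i + 5 ≤ m, a_{i+5} = a_i; that is, the sequence a runs through all 5 colors cyclically. -/
set_option maxHeartbeats 4000000 in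
theorem key5 : ∀ a0 a1 b1 a2 b2 a3 b3 : Fin 5,
    List.Pairwise (· ≠ ·) [a0, a1, b1, a2, b2] →
    List.Pairwise (· ≠ ·) [a1, a2, b2, a3, b3] →
    b3 ≠ b1 → b3 = a0 ∧ a3 = b1 := by decide

/-- Let `a_0,…,a_m` and `b_0,…,b_m` be sequences with values in a set
of `5` colors such that (i) for every `i` with `i+2 ≤ m` the five values
`a i, a (i+1), b (i+1), a (i+2), b (i+2)` are pairwise distinct, and (ii) for every `i`
with `i+3 ≤ m`, `b (i+1) ≠ b (i+3)`. Then for every `i` with `i+4 ≤ m` the values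
`a i, …, a (i+4)` are pairwise distinct, and for every `i` with `i+5 ≤ m`,
`a (i+5) = a i`; that is, `a` runs through all five colors cyclically. -/
theorem statement_11 (m : ℕ) (a b : ℕ → Fin 5)
    (h1 : ∀ i, i + 2 ≤ m →
      List.Pairwise (· ≠ ·) [a i, a (i + 1), b (i + 1), a (i + 2), b (i + 2)])
    (h2 : ∀ i, i + 3 ≤ m → b (i + 1) ≠ b (i + 3)) :
    (∀ i, i + 4 ≤ m →
      List.Pairwise (· ≠ ·) [a i, a (i + 1), a (i + 2), a (i + 3), a (i + 4)]) ∧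
    (∀ i, i + 5 ≤ m → a (i + 5) = a i) := by
  have L : ∀ i, i + 3 ≤ m → b (i + 3) = a i ∧ a (i + 3) = b (i + 1) := by
    intro i hi
    have hA := h1 i (by omega)
    have hB := h1 (i + 1) (by omega)
    simp only [show i+1+1 = i+2 from rfl, show i+1+2 = i+3 from rfl] at hB
    exact key5 _ _ _ _ _ _ _ hA hB (Ne.symm (h2 i hi))
  constructor
  · intro i hi
    obtain ⟨hb3, ha3⟩ := L i (by omega)
    obtain ⟨hb4, ha4⟩ := L (i + 1) (by omega)
    simp only [show i+1+3 = i+4 from rfl, show i+1+1 = i+2 from rfl] at ha4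
    have h := h1 i (by omega)
    rw [ha3, ha4]
    simp only [List.pairwise_cons, List.mem_cons, List.not_mem_nil, forall_eq_or_imp,
      forall_eq, or_false, false_implies, forall_false, and_true, List.Pairwise.nil] at h ⊢
    tauto
  · intro i hi
    obtain ⟨hb3, _⟩ := L i (by omega)
    obtain ⟨_, ha5⟩ := L (i + 2) (by omega)
    simp only [show i+2+3 = i+5 from rfl, show i+2+1 = i+3 from rfl] at ha5
    rw [ha5, hb3]
end
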